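/- arXiv:2008.04097 — 8 statements merged into one kernel-verified Lean document; each statement's English description precedes it below -/
import Mathlib

section
/- For every odd positive integer n, the finite sum ∑_{j=1}^{n} (-1)^{j-1} / sin(π(2j-1)/(2n)) equals n. -/
open Real Finset

/-!
Write `n = 2m + 1` and `θₖ = (2k+1)π/(2n)`, so that `sin (n θₖ) = (-1)ᵏ`. The Dirichlet kernel
identity `sin ((2m+1)θ) = sin θ · (1 + 2 ∑_{l=1}^{m} cos (2lθ))` turns the `k`-th summand into
`1 + 2 ∑_{l=1}^{m} cos ((2k+1) lπ/n)`. After exchanging the sums, each inner sum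
`∑_{k<n} cos ((2k+1) α)` equals `sin (2nα) / (2 sin α)`, which vanishes at `α = lπ/n` for
`0 < l < n`; only the `n` constant terms survive.
-/

theorem sin_mul_one_add_two_mul_sum_cos (θ : ℝ) (m : ℕ) :
    sin θ * (1 + 2 * ∑ l ∈ range m, cos (2 * (l + 1) * θ)) = sin ((2 * m + 1) * θ) := by
  induction m with
  | zero => simp
  | succ m ih =>
    have h₁ : (2 * ((m + 1 : ℕ) : ℝ) + 1) * θ = 2 * (m + 1) * θ + θ := by push_cast; ring
    have h₂ : (2 * (m : ℝ) + 1) * θ = 2 * (m + 1) * θ - θ := by ring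
    rw [h₂, sin_sub] at ih
    rw [sum_range_succ, h₁, sin_add]
    linear_combination ih

theorem two_mul_sin_mul_sum_cos_odd_mul (α : ℝ) (n : ℕ) :
    2 * sin α * ∑ j ∈ range n, cos ((2 * j + 1) * α) = sin (2 * n * α) := by
  induction n with
  | zero => simp
  | succ n ih =>
    have h₁ : 2 * ((n + 1 : ℕ) : ℝ) * α = (2 * n + 1) * α + α := by push_cast; ring
    have h₂ : 2 * (n : ℝ) * α = (2 * n + 1) * α - α := by ring
    rw [h₂, sin_sub] at ih
    rw [sum_range_succ, h₁, sin_add]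
    linear_combination ih

theorem sum_range_cos_odd_mul_nat_mul_pi_div (n l : ℕ) (hl₀ : 0 < l) (hl : l < n) :
    ∑ j ∈ range n, cos ((2 * j + 1) * (l * π / n)) = 0 := by
  have hn : (0 : ℝ) < n := by exact_mod_cast hl₀.trans hl
  have hsin : sin (l * π / n) ≠ 0 := by
    refine (sin_pos_of_pos_of_lt_pi (by positivity) ?_).ne'
    rw [div_lt_iff₀ hn, mul_comm π]
    gcongr
  have hsin_two_n : sin (2 * n * (l * π / n)) = 0 := by
    rw [show 2 * n * (l * π / n) = ((2 * l : ℕ) : ℝ) * π by field_simp; push_cast; ring]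
    exact sin_nat_mul_pi _
  have := two_mul_sin_mul_sum_cos_odd_mul (l * π / n) n
  rw [hsin_two_n] at this
  exact (mul_eq_zero.mp this).resolve_left (mul_ne_zero two_ne_zero hsin)

theorem sin_nat_mul_odd_mul_pi_div (n k : ℕ) (hn : n ≠ 0) :
    sin (n * ((2 * k + 1) * π / (2 * n))) = (-1) ^ k := by
  rw [show (n : ℝ) * ((2 * k + 1) * π / (2 * n)) = k * π + π / 2 by field_simp,
    sin_add_pi_div_two, cos_nat_mul_pi]

theorem neg_one_pow_div_sin_odd_mul_pi_div (n m k : ℕ) (hn : n = 2 * m + 1) (hk : k < n) :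
    (-1) ^ k / sin ((2 * k + 1) * π / (2 * n)) =
      1 + 2 * ∑ l ∈ range m, cos ((2 * k + 1) * ((l + 1 : ℕ) * π / n)) := by
  have hn' : (n : ℝ) = 2 * m + 1 := by rw [hn]; push_cast; ring
  have hθ : sin ((2 * k + 1) * π / (2 * n)) ≠ 0 := by
    refine (sin_pos_of_pos_of_lt_pi (by rw [hn']; positivity) ?_).ne'
    rw [div_lt_iff₀ (by rw [hn']; positivity)]
    have : (k : ℝ) + 1 ≤ n := by exact_mod_cast hk
    nlinarith [pi_pos]
  have hangle (l : ℕ) :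
      (2 * k + 1) * ((l + 1 : ℕ) * π / n) = 2 * (l + 1) * ((2 * k + 1) * π / (2 * n)) := by
    rw [hn']; field_simp; push_cast; ring
  rw [div_eq_iff hθ, ← sin_nat_mul_odd_mul_pi_div n k (by omega), mul_comm _ (sin _)]
  simp only [hangle]
  rw [sin_mul_one_add_two_mul_sum_cos, ← hn']

theorem sum_inv_sin_odd_general (n : ℕ) (hn : Odd n) :
    ∑ j ∈ Finset.Icc 1 n, (-1 : ℝ) ^ (j - 1) / Real.sin (π * (2 * j - 1) / (2 * n)) = n := by
  obtain ⟨m, hm⟩ := hn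
  have hterm (k : ℕ) (hk : k ∈ range n) :
      (-1 : ℝ) ^ (1 + k - 1) / sin (π * (2 * (1 + k : ℕ) - 1) / (2 * n)) =
        1 + 2 * ∑ l ∈ range m, cos ((2 * k + 1) * ((l + 1 : ℕ) * π / n)) := by
    rw [Nat.add_sub_cancel_left, ← neg_one_pow_div_sin_odd_mul_pi_div n m k hm (mem_range.mp hk)]
    push_cast
    ring_nf
  rw [← Ico_add_one_right_eq_Icc, sum_Ico_eq_sum_range, add_tsub_cancel_right, sum_congr rfl hterm,
    sum_add_distrib, ← mul_sum, sum_comm]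
  have hcos (l : ℕ) (hl : l ∈ range m) :
      ∑ k ∈ range n, cos ((2 * k + 1) * ((l + 1 : ℕ) * π / n)) = 0 :=
    sum_range_cos_odd_mul_nat_mul_pi_div n (l + 1) l.succ_pos (by rw [mem_range] at hl; omega)
  rw [sum_congr rfl hcos]
  simp

theorem sum_inv_sin_odd (n : ℕ) (hn : Odd n) (hpos : 0 < n) :
    ∑ j ∈ Finset.Icc 1 n, (-1 : ℝ) ^ (j - 1) / Real.sin (π * (2 * j - 1) / (2 * n)) = n :=
  sum_inv_sin_odd_general n hn
end

section
/- For every even positive integer n, the finite sum ∑_{j=1}^{n} (-1)^{j} tan(π(2j-1)/(2n)) equals (-1)^{n/2} · n. -/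
open Real Finset

/-!
Put `w = exp (2 i θ)`, so that `tan θ = i (1 - w) / (1 + w)`. For `θ = π (2j+1) / (2n)` the
`w_j = ζ ^ (2j+1)` are the odd powers of a primitive `2n`-th root of unity `ζ`, hence `w_j ^ n = -1`;
as `n` is even this makes `2 / (1 + w_j)` the geometric sum `∑_{k<n} (-w_j)^k`, and the sign
`(-1)^(j+1)` is `i · w_j^(n/2)`. Each term is thus a combination of powers `w_j ^ t`, and summing
over `j` annihilates all of them (orthogonality of roots of unity) except `t = n`, where
`w_j ^ n = -1` contributes `-n`.
-/

theorem Complex.tan_eq_I_mul_one_sub_exp_div_one_add_exp (z : ℂ) :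
    tan z = I * (1 - exp (2 * z * I)) / (1 + exp (2 * z * I)) := by
  have he : exp (z * I) ≠ 0 := exp_ne_zero _
  have hexp2 : exp (2 * z * I) = exp (z * I) ^ 2 := by
    rw [← exp_nat_mul]; push_cast; ring_nf
  have hsin : sin z = I * (1 - exp (2 * z * I)) / (2 * exp (z * I)) := by
    rw [sin, hexp2, neg_mul, exp_neg]; field_simp
  have hcos : cos z = (1 + exp (2 * z * I)) / (2 * exp (z * I)) := by
    rw [cos, hexp2, neg_mul, exp_neg]; field_simp; ring
  rw [tan_eq_sin_div_cos, hsin, hcos, div_div_div_cancel_right₀ (by simp [he])]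

section

variable {K : Type*} [Field K] {n : ℕ}

theorem one_sub_div_one_add_eq_geom_sum_sub_one {w : K} (hn : Even n) (hw : w ^ n = -1)
    (hw' : 1 + w ≠ 0) : (1 - w) / (1 + w) = ∑ k ∈ range n, (-w) ^ k - 1 := by
  have hgeom := geom_sum_mul_neg (-w) n
  rw [hn.neg_pow, hw] at hgeom
  rw [div_eq_iff hw']
  linear_combination -hgeom

theorem mul_pow_mul_cayley_eq_pow_sub_sum {ι w : K} (hι : ι ^ 2 = -1) (hn : Even n)
    (hw : w ^ n = -1) (hw' : 1 + w ≠ 0) (m : ℕ) :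
    ι * w ^ m * (ι * (1 - w) / (1 + w)) = w ^ m - ∑ k ∈ range n, (-1) ^ k * w ^ (m + k) := by
  have hshift : ∑ k ∈ range n, (-1) ^ k * w ^ (m + k) = w ^ m * ∑ k ∈ range n, (-w) ^ k := by
    rw [mul_sum]; refine sum_congr rfl fun k _ ↦ ?_
    rw [neg_pow, pow_add]; ring
  rw [mul_div_assoc, one_sub_div_one_add_eq_geom_sum_sub_one hn hw hw', hshift]
  linear_combination (w ^ m * (∑ k ∈ range n, (-w) ^ k - 1)) * hι

namespace IsPrimitiveRoot

variable {ζ : K}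

theorem pow_eq_neg_one_of_two_mul (hζ : IsPrimitiveRoot ζ (2 * n)) (hn : n ≠ 0) :
    ζ ^ n = -1 :=
  eq_neg_one_of_two_right <| by
    simpa [hn] using hζ.pow_of_dvd hn (dvd_mul_left n 2)

theorem sum_odd_pow_pow_eq_zero (hζ : IsPrimitiveRoot ζ (2 * n)) {t : ℕ} (ht : ¬n ∣ t) :
    ∑ j ∈ range n, (ζ ^ (2 * j + 1)) ^ t = 0 := by
  have hq : ζ ^ (2 * t) ≠ 1 := by
    rw [Ne, hζ.pow_eq_one_iff_dvd]
    exact fun h ↦ ht (Nat.dvd_of_mul_dvd_mul_left two_pos h)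
  have hqn : (ζ ^ (2 * t)) ^ n = 1 := by
    rw [← pow_mul, mul_right_comm, pow_mul, hζ.pow_eq_one, one_pow]
  calc ∑ j ∈ range n, (ζ ^ (2 * j + 1)) ^ t
      = ζ ^ t * ∑ j ∈ range n, (ζ ^ (2 * t)) ^ j := by
        rw [mul_sum]; refine sum_congr rfl fun j _ ↦ ?_
        rw [← pow_mul, ← pow_mul, ← pow_add]; ring_nf
    _ = 0 := by rw [geom_sum_eq hq, hqn, sub_self, zero_div, mul_zero]

theorem sum_neg_one_pow_mul_cayley (hζ : IsPrimitiveRoot ζ (2 * n)) (hn : Even n)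
    (hpos : 0 < n) :
    ∑ j ∈ range n,
        (-1) ^ (j + 1) * (ζ ^ (n / 2) * (1 - ζ ^ (2 * j + 1)) / (1 + ζ ^ (2 * j + 1))) =
      (-1) ^ (n / 2) * n := by
  obtain ⟨m, rfl⟩ := hn
  rw [show (m + m) / 2 = m by omega]
  have hζn : ζ ^ (m + m) = -1 := hζ.pow_eq_neg_one_of_two_mul (by omega)
  have hι : (ζ ^ m) ^ 2 = -1 := by rw [← pow_mul, mul_two, hζn]
  have hwn (j : ℕ) : (ζ ^ (2 * j + 1)) ^ (m + m) = -1 := by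
    rw [← pow_mul, mul_comm, pow_mul, hζn, Odd.neg_one_pow ⟨j, rfl⟩]
  have hterm : ∀ j ∈ range (m + m),
      (-1) ^ (j + 1) * (ζ ^ m * (1 - ζ ^ (2 * j + 1)) / (1 + ζ ^ (2 * j + 1))) =
        (ζ ^ (2 * j + 1)) ^ m -
          ∑ k ∈ range (m + m), (-1) ^ k * (ζ ^ (2 * j + 1)) ^ (m + k) := by
    intro j hj
    rw [mem_range] at hj
    have hw : 1 + ζ ^ (2 * j + 1) ≠ 0 := fun h ↦ by
      have := hζ.pow_inj (by omega) (by omega)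
        ((eq_neg_of_add_eq_zero_right h).trans hζn.symm)
      omega
    have hsign : (-1) ^ (j + 1) = ζ ^ m * (ζ ^ (2 * j + 1)) ^ m := by
      rw [← hι, ← pow_mul, ← pow_mul, ← pow_mul, ← pow_add]
      congr 1; ring
    rw [hsign, mul_pow_mul_cayley_eq_pow_sub_sum hι ⟨m, rfl⟩ (hwn j) hw]
  have hndvd (k : ℕ) (hk : k < m + m) (hkm : k ≠ m) : ¬m + m ∣ m + k := fun h ↦
    hkm (by have := Nat.eq_of_dvd_of_lt_two_mul (by omega) h (by omega); omega)
  rw [sum_congr rfl hterm, sum_sub_distrib, sum_comm, hζ.sum_odd_pow_pow_eq_zero (t := m)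
    (fun h ↦ by have := Nat.le_of_dvd (by omega) h; omega),
    sum_eq_single_of_mem m (mem_range.mpr (by omega))]
  · simp_rw [← mul_sum, hwn]
    simp only [sum_neg_distrib, sum_const, card_range, nsmul_eq_mul, Nat.cast_add, mul_one,
      neg_add_rev, zero_sub]
    ring
  · intro k hk hkm
    rw [← mul_sum, hζ.sum_odd_pow_pow_eq_zero (hndvd k (mem_range.mp hk) hkm), mul_zero]

end IsPrimitiveRoot

end

open Complex in
theorem sum_tan_even (n : ℕ) (hn : Even n) (hpos : 0 < n) :
    ∑ j ∈ Finset.Icc 1 n, (-1 : ℝ) ^ j * Real.tan (π * (2 * j - 1) / (2 * n)) =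
      (-1 : ℝ) ^ (n / 2) * n := by
  set ζ := exp (2 * π * I / ↑(2 * n))
  have hζ : IsPrimitiveRoot ζ (2 * n) := isPrimitiveRoot_exp _ (by omega)
  have hζI : ζ ^ (n / 2) = I := by
    have h2 : ((n / 2 : ℕ) : ℂ) * 2 = n := by exact_mod_cast Nat.div_mul_cancel hn.two_dvd
    have hn0 : ((n / 2 : ℕ) : ℂ) ≠ 0 := Nat.cast_ne_zero.mpr (by have := hn.two_dvd; omega)
    have harg : ((n / 2 : ℕ) : ℂ) * (2 * π * I / ↑(2 * n)) = π / 2 * I := by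
      rw [Nat.cast_mul, ← h2]
      field_simp
      ring
    rw [← Complex.exp_nat_mul, harg, exp_pi_div_two_mul_I]
  have hexp (j : ℕ) : exp (2 * (π * (2 * (1 + j) - 1) / (2 * n)) * I) = ζ ^ (2 * j + 1) := by
    rw [← Complex.exp_nat_mul]
    congr 1
    push_cast
    field_simp
    ring
  rw [← Finset.Ico_add_one_right_eq_Icc, Finset.sum_Ico_eq_sum_range, Nat.add_sub_cancel]
  apply ofReal_injective
  push_cast [ofReal_tan]
  rw [← hζ.sum_neg_one_pow_mul_cayley hn hpos, hζI]
  refine Finset.sum_congr rfl fun j _ ↦ ?_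
  rw [tan_eq_I_mul_one_sub_exp_div_one_add_exp, hexp, add_comm]
end

section
/- Let n ≥ 2 and 1 ≤ j ≤ ⌊n/2⌋, and set θ = π(2j-1)/(2n), x_j = -i·sin²θ/(2cosθ). Then with principal branches, arcsin(√x_j) = π(2j-1)/(4n) - (i/2)·arcsinh(tan θ) and arcsinh(√x_j) = -i·π(2j-1)/(4n) + (1/2)·arcsinh(tan θ). -/
open Real Complex

/-- Principal branch of the complex square root. -/
noncomputable def csqrt (z : ℂ) : ℂ := z ^ ((1 : ℂ) / 2)

/-- Principal branch of the complex arcsine. -/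
noncomputable def carcsin (z : ℂ) : ℂ :=
  -Complex.I * Complex.log (Complex.I * z + csqrt (1 - z ^ 2))

/-- Principal branch of the complex inverse hyperbolic sine. -/
noncomputable def carsinh (z : ℂ) : ℂ := Complex.log (z + csqrt (1 + z ^ 2))

/-!
Put `a = θ / 2` and `b = arsinh (tan θ) / 2`. Since `sinh (2b) = tan (2a)` and the doubling
formulas for `tanh` and `tan` agree, `tanh b = tan a`. Hence `sin (a - b i)` and `sinh (b - a i)`
both equal `sin a cosh b · (1 - i)`, a number with positive real part whose square is `x`, so it
is `√x`. Finally the principal branches invert `sin` on the strip `|Re w| < π / 2` and `sinh` on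
`|Im w| < π / 2`, because there `cos w`, resp. `cosh w`, is the principal root of `1 - sin² w`,
resp. `1 + sinh² w`.
-/

lemma csqrt_sq {w : ℂ} (hw : 0 < w.re) : csqrt (w ^ 2) = w := by
  rw [csqrt, one_div]
  exact sq_cpow_two_inv hw

lemma Complex.cos_re_pos_of_abs_re_lt {w : ℂ} (hw : |w.re| < π / 2) : 0 < (cos w).re := by
  obtain ⟨x, y, rfl⟩ : ∃ x y : ℝ, w = x + y * I := ⟨w.re, w.im, (re_add_im w).symm⟩
  simp only [add_re, ofReal_re, mul_re, I_re, mul_zero, ofReal_im, I_im, mul_one, sub_self,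
    add_zero] at hw
  rw [cos_add_mul_I, ← ofReal_cos, ← ofReal_cosh, ← ofReal_sin, ← ofReal_sinh]
  simpa [cos_ofReal_re] using mul_pos (Real.cos_pos_of_mem_Ioo (abs_lt.mp hw)) (Real.cosh_pos y)

lemma Complex.cosh_re_pos_of_abs_im_lt {w : ℂ} (hw : |w.im| < π / 2) : 0 < (cosh w).re := by
  obtain ⟨x, y, rfl⟩ : ∃ x y : ℝ, w = x + y * I := ⟨w.re, w.im, (re_add_im w).symm⟩
  simp only [add_im, ofReal_im, mul_im, I_re, mul_zero, ofReal_re, I_im, mul_one, zero_add] at hw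
  rw [cosh_add, cosh_mul_I, sinh_mul_I, ← ofReal_cos, ← ofReal_cosh, ← ofReal_sin,
    ← ofReal_sinh]
  simpa [cos_ofReal_re] using mul_pos (Real.cosh_pos x) (Real.cos_pos_of_mem_Ioo (abs_lt.mp hw))

theorem carcsin_sin {w : ℂ} (hw : |w.re| < π / 2) : carcsin (sin w) = w := by
  have hre := abs_lt.mp hw
  rw [carcsin, ← Complex.cos_sq', csqrt_sq (cos_re_pos_of_abs_re_lt hw),
    show I * sin w + cos w = exp (w * I) by rw [← cos_add_sin_I]; ring, Complex.log_exp]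
  · linear_combination -w * I_sq
  all_goals rw [mul_I_im]; linarith [pi_pos]

theorem carsinh_sinh {w : ℂ} (hw : |w.im| < π / 2) : carsinh (sinh w) = w := by
  have him := abs_lt.mp hw
  rw [carsinh, add_comm 1, ← Complex.cosh_sq, csqrt_sq (cosh_re_pos_of_abs_im_lt hw),
    Complex.sinh_add_cosh, Complex.log_exp] <;> linarith [pi_pos]

lemma Real.sin_mul_cosh_eq_cos_mul_sinh {a b : ℝ} (ha : |a| < π / 4)
    (hb : sinh (2 * b) = tan (2 * a)) : sin a * cosh b = cos a * sinh b := by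
  have hcos2 : 0 < cos (2 * a) :=
    Real.cos_pos_of_mem_Ioo ⟨by linarith [neg_abs_le a], by linarith [le_abs_self a]⟩
  have hca : 0 < cos a :=
    Real.cos_pos_of_mem_Ioo
      ⟨by linarith [neg_abs_le a, pi_pos], by linarith [le_abs_self a, pi_pos]⟩
  have hsa : |sin a| < cos a := by
    rw [cos_two_mul'] at hcos2
    exact abs_lt_of_sq_lt_sq (by nlinarith [sin_sq_add_cos_sq a]) hca.le
  have hsb : |sinh b| < cosh b := abs_lt_of_sq_lt_sq (by nlinarith [cosh_sq b]) (cosh_pos b).le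
  have hpos : 0 < cosh b * cos a + sinh b * sin a := by
    have : |sinh b * sin a| < cosh b * cos a := by
      rw [abs_mul]
      exact mul_lt_mul'' hsb hsa (abs_nonneg _) (abs_nonneg _)
    linarith [neg_abs_le (sinh b * sin a)]
  rw [sinh_two_mul, tan_eq_sin_div_cos, eq_div_iff hcos2.ne', sin_two_mul, cos_two_mul'] at hb
  -- `hb` is `(tanh b - tan a) * (1 + tanh b * tan a) = 0` with denominators cleared.
  have hfactor : (sinh b * cos a - sin a * cosh b) * (cosh b * cos a + sinh b * sin a) = 0 := by
    linear_combination hb / 2 - sin a * cos a * cosh_sq b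
  linarith [(mul_eq_zero.mp hfactor).resolve_right hpos.ne']

lemma csqrt_eq_sin_and_sinh {θ : ℝ} (h0 : 0 < θ) (h1 : θ < π / 2) :
    csqrt (-I * (Real.sin θ : ℂ) ^ 2 / (2 * (Real.cos θ : ℂ))) =
        sin ((θ / 2 : ℝ) - (arsinh (tan θ) / 2 : ℝ) * I) ∧
      csqrt (-I * (Real.sin θ : ℂ) ^ 2 / (2 * (Real.cos θ : ℂ))) =
        sinh ((arsinh (tan θ) / 2 : ℝ) - (θ / 2 : ℝ) * I) := by
  set a := θ / 2
  set b := arsinh (tan θ) / 2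
  have hθ : θ = 2 * a := by ring
  have htanh : Real.sin a * Real.cosh b = Real.cos a * Real.sinh b :=
    Real.sin_mul_cosh_eq_cos_mul_sinh (abs_lt.mpr ⟨by linarith [pi_pos], by linarith⟩)
      (by rw [← hθ, mul_div_cancel₀ _ two_ne_zero, sinh_arsinh])
  have hcosh : Real.cosh b ^ 2 * Real.cos θ = Real.cos a ^ 2 := by
    rw [hθ, Real.cos_two_mul']
    linear_combination Real.cos a ^ 2 * Real.cosh_sq b -
      (Real.sin a * Real.cosh b + Real.cos a * Real.sinh b) * htanh
  have htanhC : sin (a : ℂ) * cosh (b : ℂ) = cos (a : ℂ) * sinh (b : ℂ) := by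
    exact_mod_cast htanh
  have hcoshC : cosh (b : ℂ) ^ 2 * cos (θ : ℂ) = cos (a : ℂ) ^ 2 := by exact_mod_cast hcosh
  have hsinθ : sin (θ : ℂ) = 2 * sin (a : ℂ) * cos (a : ℂ) := by
    rw [hθ, ofReal_mul, ofReal_ofNat, Complex.sin_two_mul]
  set w : ℂ := (Real.sin a * Real.cosh b : ℝ) * (1 - I)
  have hw : 0 < w.re := by
    simp only [w, re_ofReal_mul, sub_re, one_re, I_re, sub_zero, mul_one]
    exact mul_pos (Real.sin_pos_of_pos_of_lt_pi (by positivity) (by linarith)) (cosh_pos b)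
  have hsin : sin (a - b * I) = w := by
    rw [Complex.sin_sub, cos_mul_I, sin_mul_I]
    push_cast [w]
    linear_combination I * htanhC
  have hsinh : sinh (b - a * I) = w := by
    rw [Complex.sinh_sub, cosh_mul_I, sinh_mul_I]
    push_cast [w]
    linear_combination -htanhC
  have hx : -I * (Real.sin θ : ℂ) ^ 2 / (2 * (Real.cos θ : ℂ)) = w ^ 2 := by
    have hcos : (Real.cos θ : ℂ) ≠ 0 := by
      exact_mod_cast (Real.cos_pos_of_mem_Ioo ⟨by linarith, h1⟩).ne'
    rw [div_eq_iff (mul_ne_zero two_ne_zero hcos)]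
    push_cast [w, hsinθ]
    linear_combination (4 * I * sin (a : ℂ) ^ 2) * hcoshC -
      2 * sin (a : ℂ) ^ 2 * cosh (b : ℂ) ^ 2 * cos (θ : ℂ) * I_sq
  rw [hx, csqrt_sq hw]
  exact ⟨hsin.symm, hsinh.symm⟩

theorem carcsin_csqrt_eq {θ : ℝ} (h0 : 0 < θ) (h1 : θ < π / 2) :
    carcsin (csqrt (-I * (Real.sin θ : ℂ) ^ 2 / (2 * (Real.cos θ : ℂ)))) =
      (θ / 2 : ℝ) - I / 2 * (arsinh (tan θ) : ℂ) := by
  rw [(csqrt_eq_sin_and_sinh h0 h1).1, carcsin_sin]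
  · push_cast; ring
  · simpa [abs_of_pos (half_pos h0)] using by linarith

theorem carsinh_csqrt_eq {θ : ℝ} (h0 : 0 < θ) (h1 : θ < π / 2) :
    carsinh (csqrt (-I * (Real.sin θ : ℂ) ^ 2 / (2 * (Real.cos θ : ℂ)))) =
      -I * (θ / 2 : ℝ) + 1 / 2 * (arsinh (tan θ) : ℂ) := by
  rw [(csqrt_eq_sin_and_sinh h0 h1).2, carsinh_sinh]
  · push_cast; ring
  · simpa [abs_of_pos (half_pos h0)] using by linarith

theorem principal_branch_values_general (n j : ℕ) (hj1 : 1 ≤ j) (hj2 : j ≤ n / 2) :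
    let θ : ℝ := π * (2 * j - 1) / (2 * n)
    let x : ℂ := -Complex.I * (Real.sin θ : ℂ) ^ 2 / (2 * (Real.cos θ : ℂ))
    carcsin (csqrt x) =
        (π * (2 * j - 1) / (4 * n) : ℝ) -
          Complex.I / 2 * (Real.arsinh (Real.tan θ) : ℂ) ∧
      carsinh (csqrt x) =
        -Complex.I * (π * (2 * j - 1) / (4 * n) : ℝ) +
          (1 : ℂ) / 2 * (Real.arsinh (Real.tan θ) : ℂ) := by
  intro θ x
  have hj : (1 : ℝ) ≤ j := by exact_mod_cast hj1
  have h2j : 2 * (j : ℝ) ≤ n := by exact_mod_cast (by omega : 2 * j ≤ n)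
  have h0 : 0 < θ := div_pos (mul_pos pi_pos (by linarith)) (by linarith)
  have h1 : θ < π / 2 := by
    rw [div_lt_div_iff₀ (by linarith) two_pos]
    nlinarith [pi_pos]
  have hhalf : π * (2 * j - 1) / (4 * n) = θ / 2 := by
    simp only [θ]; field_simp; ring
  rw [hhalf]
  exact ⟨carcsin_csqrt_eq h0 h1, carsinh_csqrt_eq h0 h1⟩

theorem principal_branch_values (n j : ℕ) (hn : 2 ≤ n) (hj1 : 1 ≤ j) (hj2 : j ≤ n / 2) :
    let θ : ℝ := π * (2 * j - 1) / (2 * n)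
    let x : ℂ := -Complex.I * (Real.sin θ : ℂ) ^ 2 / (2 * (Real.cos θ : ℂ))
    carcsin (csqrt x) =
        (π * (2 * j - 1) / (4 * n) : ℝ) -
          Complex.I / 2 * (Real.arsinh (Real.tan θ) : ℂ) ∧
      carsinh (csqrt x) =
        -Complex.I * (π * (2 * j - 1) / (4 * n) : ℝ) +
          (1 : ℂ) / 2 * (Real.arsinh (Real.tan θ) : ℂ) :=
  principal_branch_values_general n j hj1 hj2
end

section
/- For integers n ≥ 2 and j with 1 ≤ j ≤ ⌊n/2⌋, setting θ = π(2j-1)/(2n), the real integral ∫_0^1 dt / ((4t² + sin⁴θ/cos²θ)·√(1-t²)) equals (π/2)·cot²θ/(1 + cos²θ). -/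
/-!
For `a > 0` the integrand `1 / ((4t² + a²) √(1 - t²))` has the primitive
`arcsin (√(a² + 4) t / √(4t² + a²)) / (a √(a² + 4))`. Unlike the arctan form
`arctan (√(a² + 4) t / (a √(1 - t²)))` it is continuous on all of `[0, 1]`, so the fundamental
theorem of calculus applies directly to the improper integral, giving `π / (2 a √(a² + 4))`.
For `a = sin² θ / cos θ` with `θ ∈ (0, π/2)` one has
`√(a² + 4) = (1 + cos² θ) / cos θ`.
-/

open Real intervalIntegral Set MeasureTheory

section ArcsinPrimitive

variable {a : ℝ}

lemma continuous_arcsin_mul_div_sqrt (ha : a ≠ 0) :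
    Continuous fun t : ℝ => arcsin (√(a ^ 2 + 4) * t / √(4 * t ^ 2 + a ^ 2)) := by
  refine continuous_arcsin.comp (Continuous.div (by fun_prop) (by fun_prop) fun t => ?_)
  exact (sqrt_pos.2 (by positivity)).ne'

lemma sqrt_one_sub_sq_mul_div_sqrt (ha : 0 < a) {t : ℝ} (ht : t ^ 2 ≤ 1) :
    √(1 - (√(a ^ 2 + 4) * t / √(4 * t ^ 2 + a ^ 2)) ^ 2) =
      a * √(1 - t ^ 2) / √(4 * t ^ 2 + a ^ 2) := by
  have hr : 0 < 4 * t ^ 2 + a ^ 2 := by positivity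
  rw [← sqrt_sq (by positivity : 0 ≤ a * √(1 - t ^ 2) / √(4 * t ^ 2 + a ^ 2))]
  congr 1
  rw [div_pow, div_pow, mul_pow, mul_pow, sq_sqrt (by positivity), sq_sqrt hr.le,
    sq_sqrt (by linarith)]
  field_simp
  ring

lemma hasDerivAt_arcsin_mul_div_sqrt (ha : 0 < a) {t : ℝ} (ht : t ^ 2 < 1) :
    HasDerivAt (fun t : ℝ => arcsin (√(a ^ 2 + 4) * t / √(4 * t ^ 2 + a ^ 2)))
      (a * √(a ^ 2 + 4) / ((4 * t ^ 2 + a ^ 2) * √(1 - t ^ 2))) t := by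
  set b := √(a ^ 2 + 4)
  have hr : 0 < 4 * t ^ 2 + a ^ 2 := by positivity
  have hsr : 0 < √(4 * t ^ 2 + a ^ 2) := sqrt_pos.2 hr
  have hst : 0 < √(1 - t ^ 2) := sqrt_pos.2 (by linarith)
  have hb : b ^ 2 = a ^ 2 + 4 := sq_sqrt (by positivity)
  have hr' : HasDerivAt (fun t : ℝ => √(4 * t ^ 2 + a ^ 2)) (4 * t / √(4 * t ^ 2 + a ^ 2)) t :=
    (((hasDerivAt_pow 2 t).const_mul 4).add_const _).sqrt hr.ne' |>.congr_deriv
      (by field_simp; ring)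
  have hu := ((hasDerivAt_id' t).const_mul b).div hr' hsr.ne'
  have hu_sq : (b * t / √(4 * t ^ 2 + a ^ 2)) ^ 2 < 1 := by
    rw [div_pow, mul_pow, hb, sq_sqrt hr.le, div_lt_one hr]
    nlinarith [mul_pos (pow_pos ha 2) (by linarith : 0 < 1 - t ^ 2)]
  have hne : b * t / √(4 * t ^ 2 + a ^ 2) ≠ 1 ∧ b * t / √(4 * t ^ 2 + a ^ 2) ≠ -1 := by
    constructor <;> rintro h <;> rw [h] at hu_sq <;> norm_num at hu_sq
  refine (hasDerivAt_arcsin hne.2 hne.1).comp t hu |>.congr_deriv ?_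
  rw [sqrt_one_sub_sq_mul_div_sqrt ha ht.le]
  have hr2 := sq_sqrt hr.le
  set r := √(4 * t ^ 2 + a ^ 2)
  field_simp
  linear_combination 4 * b * t ^ 2 * hr2

theorem integral_one_div_quadratic_mul_sqrt_one_sub_sq (ha : 0 < a) :
    ∫ t in (0 : ℝ)..1, 1 / ((4 * t ^ 2 + a ^ 2) * √(1 - t ^ 2)) =
      π / (2 * a * √(a ^ 2 + 4)) := by
  have hb : 0 < √(a ^ 2 + 4) := sqrt_pos.2 (by positivity)
  set F : ℝ → ℝ := fun t =>
    arcsin (√(a ^ 2 + 4) * t / √(4 * t ^ 2 + a ^ 2)) / (a * √(a ^ 2 + 4))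
  have hF : ∀ t ∈ Ioo (0 : ℝ) 1,
      HasDerivAt F (1 / ((4 * t ^ 2 + a ^ 2) * √(1 - t ^ 2))) t := fun t ht =>
    (hasDerivAt_arcsin_mul_div_sqrt ha (by nlinarith [ht.1, ht.2])).div_const _ |>.congr_deriv
      (by field_simp)
  have hF_cont : ContinuousOn F (Icc 0 1) :=
    ((continuous_arcsin_mul_div_sqrt ha.ne').div_const _).continuousOn
  have hint :
      IntervalIntegrable (fun t => 1 / ((4 * t ^ 2 + a ^ 2) * √(1 - t ^ 2))) volume 0 1 :=
    (intervalIntegrable_iff_integrableOn_Ioc_of_le zero_le_one).2 <|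
      integrableOn_deriv_of_nonneg hF_cont hF fun t _ => by positivity
  rw [integral_eq_sub_of_hasDerivAt_of_le zero_le_one hF_cont hF hint]
  simp only [F, mul_one, one_pow, mul_zero, zero_div, arcsin_zero, add_comm (4 : ℝ),
    div_self hb.ne', arcsin_one]
  field_simp
  ring

end ArcsinPrimitive

theorem integral_eq_cot_sq_div_of_mem_Ioo {θ : ℝ} (hθ : θ ∈ Ioo 0 (π / 2)) :
    ∫ t in (0 : ℝ)..1, 1 / ((4 * t ^ 2 + sin θ ^ 4 / cos θ ^ 2) * √(1 - t ^ 2)) =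
      π / 2 * (cos θ / sin θ) ^ 2 / (1 + cos θ ^ 2) := by
  have hcos : 0 < cos θ := cos_pos_of_mem_Ioo ⟨by linarith [hθ.1, pi_pos], hθ.2⟩
  have hsin : 0 < sin θ := sin_pos_of_pos_of_lt_pi hθ.1 (by linarith [hθ.2, pi_pos])
  have ha : sin θ ^ 4 / cos θ ^ 2 = (sin θ ^ 2 / cos θ) ^ 2 := by ring
  have hb : √((sin θ ^ 2 / cos θ) ^ 2 + 4) = (1 + cos θ ^ 2) / cos θ := by
    rw [sqrt_eq_iff_eq_sq (by positivity) (by positivity), sin_sq]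
    field_simp
    ring
  rw [ha, integral_one_div_quadratic_mul_sqrt_one_sub_sq (by positivity), hb]
  field_simp

lemma pi_mul_two_mul_sub_one_div_mem_Ioo {n j : ℕ} (hj : 1 ≤ j) (hjn : 2 * j ≤ n) :
    π * (2 * j - 1) / (2 * n) ∈ Ioo 0 (π / 2) := by
  have hj' : (1 : ℝ) ≤ j := by exact_mod_cast hj
  have hjn' : 2 * (j : ℝ) ≤ n := by exact_mod_cast hjn
  constructor
  · exact div_pos (by nlinarith [pi_pos]) (by linarith)
  · rw [div_lt_iff₀ (by linarith)]
    nlinarith [pi_pos]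

theorem integral_lemma_theta_j_general (n j : ℕ) (hj1 : 1 ≤ j) (hj2 : j ≤ n / 2) :
    let θ : ℝ := π * (2 * j - 1) / (2 * n)
    ∫ t in (0 : ℝ)..1,
        1 / ((4 * t ^ 2 + Real.sin θ ^ 4 / Real.cos θ ^ 2) * Real.sqrt (1 - t ^ 2)) =
      π / 2 * (Real.cos θ / Real.sin θ) ^ 2 / (1 + Real.cos θ ^ 2) :=
  integral_eq_cot_sq_div_of_mem_Ioo (pi_mul_two_mul_sub_one_div_mem_Ioo hj1 (by omega))

theorem integral_lemma_theta_j (n j : ℕ) (hn : 2 ≤ n) (hj1 : 1 ≤ j) (hj2 : j ≤ n / 2) :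
    let θ : ℝ := π * (2 * j - 1) / (2 * n)
    ∫ t in (0 : ℝ)..1,
        1 / ((4 * t ^ 2 + Real.sin θ ^ 4 / Real.cos θ ^ 2) * Real.sqrt (1 - t ^ 2)) =
      π / 2 * (Real.cos θ / Real.sin θ) ^ 2 / (1 + Real.cos θ ^ 2) :=
  integral_lemma_theta_j_general n j hj1 hj2
end

section
/- For every positive integer n, the function Q_n(t) := cos(2n·arcsin√t) + cosh(2n·arcsinh√t) (extended analytically) is an even polynomial in t of degree 2⌊n/2⌋ with leading coefficient 2^{2n-1}(1 + (-1)^n), and its roots are exactly ±i·sin²(π(2j-1)/(2n))/(2cos(π(2j-1)/(2n))) for j = 1, ..., ⌊n/2⌋. -/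
open Real Complex Polynomial Finset

/-!
With `T n` the Chebyshev polynomial, `cos (2n arcsin √t) = T n (1 - 2t)` and
`cosh (2n arsinh √t) = T n (1 + 2t)`, so `Q_n(z) = T n (1 - 2z) + T n (1 + 2z)`. This is even
in `z`, has degree at most `n`, and its `z ^ n` coefficient is `2 ^ (n - 1) * ((-2) ^ n + 2 ^ n)`;
being even, its degree is at most `2 ⌊n/2⌋`.

For `0 < θ < π/2` put `z = i sin² θ / (2 cos θ)` and `ψ = arsinh (tan θ)`. Then
`1 ∓ 2z = cos (θ ± iψ)`, so `Q_n(z) = 2 cos (nθ) cos (inψ)`, which vanishes at `θ = π(2j-1)/(2n)`.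
These `z` and their negatives are `2 ⌊n/2⌋` distinct roots, as `sin² θ / (2 cos θ)` is positive
and increasing on `(0, π/2)`. Counting against the degree bound, they are all the roots and the
degree is exactly `2 ⌊n/2⌋`.
-/

namespace Polynomial

variable {R : Type*}

lemma coeff_comp_neg_X [CommRing R] (p : R[X]) (m : ℕ) :
    (p.comp (-X)).coeff m = (-1) ^ m * p.coeff m := by
  rw [← neg_one_mul, ← C_1, ← C_neg, comp_C_mul_X_coeff, mul_comm]

lemma coeff_eq_zero_of_comp_neg_X_eq_self [CommRing R] [IsDomain R] [CharZero R] {p : R[X]}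
    (hp : p.comp (-X) = p) {m : ℕ} (hm : Odd m) : p.coeff m = 0 := by
  have h := coeff_comp_neg_X p m
  rw [hp, hm.neg_one_pow, neg_one_mul] at h
  exact self_eq_neg.mp h

lemma even_natDegree_of_coeff_odd_eq_zero [Semiring R] {p : R[X]}
    (hp : ∀ m, Odd m → p.coeff m = 0) : Even p.natDegree := by
  by_contra hodd
  have hzero : p = 0 := leadingCoeff_eq_zero.mp (hp _ (Nat.not_even_iff_odd.mp hodd))
  exact hodd (by simp [hzero])

lemma card_le_natDegree_of_forall_isRoot [CommRing R] [IsDomain R] {p : R[X]} (hp : p ≠ 0)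
    {S : Finset R} (hS : ∀ x ∈ S, p.IsRoot x) : #S ≤ p.natDegree :=
  card_le_degree_of_subset_roots fun x hx => (mem_roots hp).mpr (hS x hx)

lemma mem_of_isRoot_of_natDegree_le_card [CommRing R] [IsDomain R] [DecidableEq R] {p : R[X]}
    (hp : p ≠ 0) {S : Finset R} (hS : ∀ x ∈ S, p.IsRoot x) (hdeg : p.natDegree ≤ #S)
    {x : R} (hx : p.IsRoot x) : x ∈ S := by
  by_contra hxS
  have := card_le_natDegree_of_forall_isRoot hp ((forall_mem_insert x S _).mpr ⟨hx, hS⟩)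
  rw [card_insert_of_notMem hxS] at this
  omega

lemma eq_of_forall_eval_ofReal_eq {p q : ℂ[X]} {s : Set ℝ} (hs : s.Infinite)
    (h : ∀ t ∈ s, p.eval (t : ℂ) = q.eval (t : ℂ)) : p = q :=
  eq_of_infinite_eval_eq p q <| (hs.image ofReal_injective.injOn).mono <| by
    rintro _ ⟨t, ht, rfl⟩
    exact h t ht

end Polynomial

lemma card_biUnion_pair_neg {α : Type*} {s : Finset α} {f : α → ℂ}
    (hinj : Set.InjOn (fun i => (f i).im) s) (hpos : ∀ i ∈ s, 0 < (f i).im) :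
    #(s.biUnion fun i => {f i, -f i}) = 2 * #s := by
  rw [card_biUnion, mul_comm, ← smul_eq_mul, ← sum_const]
  · refine sum_congr rfl fun i hi => card_pair fun h => ?_
    have := congrArg Complex.im h
    simp only [neg_im] at this
    linarith [hpos i hi]
  · intro i hi j hj hij
    simp only [Function.onFun, disjoint_left]
    intro z hzi hzj
    simp only [mem_insert, mem_singleton] at hzi hzj
    have hi' := hpos i hi
    have hj' := hpos j hj
    rcases hzi with rfl | rfl <;> rcases hzj with h | h <;>
      have h' := congrArg Complex.im h <;> try simp only [neg_im, neg_inj] at h'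
    all_goals first | linarith | exact hij (hinj hi hj h')

noncomputable def Qn (n : ℕ) : ℂ[X] :=
  (Chebyshev.T ℂ n).comp (1 - 2 * X) + (Chebyshev.T ℂ n).comp (1 + 2 * X)

lemma Qn_eval (n : ℕ) (z : ℂ) :
    (Qn n).eval z = (Chebyshev.T ℂ n).eval (1 - 2 * z) + (Chebyshev.T ℂ n).eval (1 + 2 * z) := by
  simp [Qn, eval_comp]

lemma Qn_eval_zero (n : ℕ) : (Qn n).eval 0 = 2 := by
  norm_num [Qn_eval]

lemma Qn_ne_zero (n : ℕ) : Qn n ≠ 0 := fun h => by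
  simpa [h] using Qn_eval_zero n

lemma Qn_comp_neg_X (n : ℕ) : (Qn n).comp (-X) = Qn n := by
  rw [Qn, add_comp, comp_assoc, comp_assoc, add_comm]
  congr 2 <;> simp [sub_eq_add_neg]

lemma Qn_eval_neg (n : ℕ) (z : ℂ) : (Qn n).eval (-z) = (Qn n).eval z := by
  conv_rhs => rw [← Qn_comp_neg_X]
  simp [eval_comp]

lemma natDegree_one_sub_two_mul_X : (1 - 2 * X : ℂ[X]).natDegree = 1 := by compute_degree!
lemma natDegree_one_add_two_mul_X : (1 + 2 * X : ℂ[X]).natDegree = 1 := by compute_degree!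

lemma Qn_natDegree_le (n : ℕ) : (Qn n).natDegree ≤ n := by
  refine (natDegree_add_le _ _).trans (max_le ?_ ?_) <;>
    simp [natDegree_comp, natDegree_one_sub_two_mul_X, natDegree_one_add_two_mul_X]

lemma Qn_coeff_self (n : ℕ) : (Qn n).coeff n = 2 ^ (2 * n - 1) * (1 + (-1 : ℂ) ^ n) := by
  have hcoeff (q : ℂ[X]) (hq : q.natDegree = 1) :
      ((Chebyshev.T ℂ n).comp q).coeff n = 2 ^ (n - 1) * q.leadingCoeff ^ n := by
    simpa [hq] using coeff_comp_degree_mul_degree (p := Chebyshev.T ℂ n) (q := q) (by simp [hq])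
  rw [Qn, coeff_add, hcoeff _ natDegree_one_sub_two_mul_X, hcoeff _ natDegree_one_add_two_mul_X,
    leadingCoeff, leadingCoeff, natDegree_one_sub_two_mul_X, natDegree_one_add_two_mul_X]
  rcases n with _ | k
  · norm_num
  · rw [show 2 * (k + 1) - 1 = 2 * k + 1 by omega, Nat.add_sub_cancel]
    simp only [coeff_sub, coeff_add, coeff_one, one_ne_zero, ↓reduceIte, coeff_ofNat_mul,
      coeff_X, mul_one, zero_sub, zero_add]
    rw [neg_pow (2 : ℂ)]
    ring

lemma Real.cos_two_mul_arcsin_sqrt {t : ℝ} (h0 : 0 ≤ t) (h1 : t ≤ 1) :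
    Real.cos (2 * arcsin √t) = 1 - 2 * t := by
  rw [Real.cos_two_mul', Real.cos_sq', Real.sin_arcsin (by linarith [Real.sqrt_nonneg t])
    (Real.sqrt_le_one.mpr h1), Real.sq_sqrt h0]
  ring

lemma Real.cosh_two_mul_arsinh_sqrt {t : ℝ} (h0 : 0 ≤ t) :
    Real.cosh (2 * arsinh √t) = 1 + 2 * t := by
  rw [Real.cosh_two_mul, Real.cosh_sq, Real.sinh_arsinh, Real.sq_sqrt h0]
  ring

lemma Qn_eval_ofReal {n : ℕ} {t : ℝ} (h0 : 0 ≤ t) (h1 : t ≤ 1) :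
    (Qn n).eval (t : ℂ) =
      ((Real.cos (2 * n * arcsin √t) + Real.cosh (2 * n * arsinh √t) : ℝ) : ℂ) := by
  have hcos : (Chebyshev.T ℝ n).eval (1 - 2 * t) = Real.cos (2 * n * arcsin √t) := by
    rw [← Real.cos_two_mul_arcsin_sqrt h0 h1, Chebyshev.T_real_cos]
    congr 1
    push_cast
    ring
  have hcosh : (Chebyshev.T ℝ n).eval (1 + 2 * t) = Real.cosh (2 * n * arsinh √t) := by
    rw [← Real.cosh_two_mul_arsinh_sqrt h0, Chebyshev.T_real_cosh]
    congr 1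
    push_cast
    ring
  rw [Qn_eval, ← hcos, ← hcosh]
  rw [ofReal_add, Chebyshev.complex_ofReal_eval_T, Chebyshev.complex_ofReal_eval_T]
  push_cast
  rfl

lemma Qn_eval_eq_two_mul_cos_mul_cos (n : ℕ) {z α β : ℂ} (h₁ : Complex.cos (α + β) = 1 - 2 * z)
    (h₂ : Complex.cos (α - β) = 1 + 2 * z) :
    (Qn n).eval z = 2 * Complex.cos (n * α) * Complex.cos (n * β) := by
  rw [Qn_eval, ← h₁, ← h₂, Chebyshev.T_complex_cos, Chebyshev.T_complex_cos, mul_add, mul_sub,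
    Complex.cos_add, Complex.cos_sub]
  push_cast
  ring

noncomputable def qRoot (θ : ℝ) : ℂ := I * (Real.sin θ : ℂ) ^ 2 / (2 * (Real.cos θ : ℂ))

lemma qRoot_im (θ : ℝ) : (qRoot θ).im = Real.sin θ ^ 2 / (2 * Real.cos θ) := by
  rw [qRoot, show (2 : ℂ) = ((2 : ℝ) : ℂ) by norm_num, ← ofReal_pow, ← ofReal_mul, mul_div_assoc,
    ← ofReal_div, I_mul_im, ofReal_re]

lemma cos_add_arsinh_tan_mul_I {θ : ℝ} (hθ : 0 < Real.cos θ) :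
    Complex.cos (θ + arsinh (Real.tan θ) * I) = 1 - 2 * qRoot θ ∧
      Complex.cos (θ - arsinh (Real.tan θ) * I) = 1 + 2 * qRoot θ := by
  have hcosh : Real.cos θ * Real.cosh (arsinh (Real.tan θ)) = 1 := by
    rw [Real.cosh_arsinh, ← Real.inv_sqrt_one_add_tan_sq hθ, inv_mul_cancel₀]
    positivity
  have hsinh : Real.sin θ * Real.sinh (arsinh (Real.tan θ)) = Real.sin θ ^ 2 / Real.cos θ := by
    rw [Real.sinh_arsinh, Real.tan_eq_sin_div_cos]
    ring
  have hcosh' : (Real.cos θ : ℂ) * (Real.cosh (arsinh (Real.tan θ)) : ℂ) = 1 := by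
    exact_mod_cast hcosh
  have hsinh' : (Real.sin θ : ℂ) * (Real.sinh (arsinh (Real.tan θ)) : ℂ) =
      (Real.sin θ : ℂ) ^ 2 / (Real.cos θ : ℂ) := by
    exact_mod_cast hsinh
  simp only [Complex.cos_add, Complex.cos_sub, Complex.cos_mul_I, Complex.sin_mul_I, qRoot,
    ← ofReal_cos, ← ofReal_sin, ← ofReal_cosh, ← ofReal_sinh]
  constructor
  · linear_combination hcosh' - I * hsinh'
  · linear_combination hcosh' + I * hsinh'

lemma Qn_eval_qRoot {n : ℕ} {θ : ℝ} (hθ : 0 < Real.cos θ) (hnθ : Real.cos (n * θ) = 0) :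
    (Qn n).eval (qRoot θ) = 0 := by
  obtain ⟨h₁, h₂⟩ := cos_add_arsinh_tan_mul_I hθ
  rw [Qn_eval_eq_two_mul_cos_mul_cos n h₁ h₂, ← ofReal_natCast, ← ofReal_mul, ← ofReal_cos, hnθ,
    ofReal_zero, mul_zero, zero_mul]

lemma qRoot_im_pos {θ : ℝ} (hθ : θ ∈ Set.Ioo 0 (π / 2)) : 0 < (qRoot θ).im := by
  rw [qRoot_im]
  have := Real.sin_pos_of_pos_of_lt_pi hθ.1 (by linarith [hθ.2, Real.pi_pos])
  have := Real.cos_pos_of_mem_Ioo ⟨by linarith [hθ.1, Real.pi_pos], hθ.2⟩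
  positivity

lemma strictMonoOn_qRoot_im : StrictMonoOn (fun θ => (qRoot θ).im) (Set.Ico 0 (π / 2)) := by
  intro θ₁ h₁ θ₂ h₂ hlt
  have hc₂ := Real.cos_pos_of_mem_Ioo ⟨by linarith [h₂.1, Real.pi_pos], h₂.2⟩
  have hc : Real.cos θ₂ < Real.cos θ₁ :=
    Real.strictAntiOn_cos ⟨h₁.1, by linarith [h₁.2, Real.pi_pos]⟩
      ⟨h₂.1, by linarith [h₂.2, Real.pi_pos]⟩ hlt
  simp only [qRoot_im, Real.sin_sq]
  rw [div_lt_div_iff₀ (by linarith) (by linarith)]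
  nlinarith [mul_pos (sub_pos.mpr hc) (show 0 < 1 + Real.cos θ₁ * Real.cos θ₂ by nlinarith)]

noncomputable def rootAngle (n j : ℕ) : ℝ := π * (2 * j - 1) / (2 * n)

lemma rootAngle_strictMono {n : ℕ} (hn : 0 < n) : StrictMono (rootAngle n) := by
  intro j k hjk
  unfold rootAngle
  gcongr

lemma rootAngle_mem_Ioo {n j : ℕ} (hj : 1 ≤ j) (hjn : 2 * j ≤ n) :
    rootAngle n j ∈ Set.Ioo 0 (π / 2) := by
  have hj' : (1 : ℝ) ≤ j := by exact_mod_cast hj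
  have hjn' : 2 * (j : ℝ) ≤ n := by exact_mod_cast hjn
  constructor
  · exact div_pos (mul_pos Real.pi_pos (by linarith)) (by linarith)
  · rw [rootAngle, div_lt_div_iff₀ (by linarith) two_pos]
    nlinarith [Real.pi_pos]

lemma cos_mul_rootAngle {n : ℕ} (hn : n ≠ 0) (j : ℕ) : Real.cos (n * rootAngle n j) = 0 := by
  rw [Real.cos_eq_zero_iff]
  refine ⟨j - 1, ?_⟩
  rw [rootAngle]
  field_simp
  push_cast
  ring

noncomputable def qRoots (n : ℕ) : Finset ℂ :=
  (Icc 1 (n / 2)).biUnion fun j => {qRoot (rootAngle n j), -qRoot (rootAngle n j)}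

lemma mem_qRoots {n : ℕ} {z : ℂ} :
    z ∈ qRoots n ↔ ∃ j ∈ Icc 1 (n / 2), z = qRoot (rootAngle n j) ∨ z = -qRoot (rootAngle n j) := by
  simp [qRoots]

lemma card_qRoots (n : ℕ) : #(qRoots n) = 2 * (n / 2) := by
  rcases n.eq_zero_or_pos with rfl | hn
  · rfl
  rw [qRoots, card_biUnion_pair_neg, Nat.card_Icc, Nat.add_sub_cancel]
  · refine (strictMonoOn_qRoot_im.comp ((rootAngle_strictMono hn).strictMonoOn _) ?_).injOn
    intro j hj
    simp only [coe_Icc, Set.mem_Icc] at hj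
    exact Set.Ioo_subset_Ico_self (rootAngle_mem_Ioo hj.1 (by omega))
  · intro j hj
    simp only [mem_Icc] at hj
    exact qRoot_im_pos (rootAngle_mem_Ioo hj.1 (by omega))

lemma Qn_isRoot_of_mem_qRoots {n : ℕ} {z : ℂ} (hz : z ∈ qRoots n) : (Qn n).IsRoot z := by
  obtain ⟨j, hj, hz⟩ := mem_qRoots.mp hz
  rw [mem_Icc] at hj
  have hθ := rootAngle_mem_Ioo hj.1 (by omega : 2 * j ≤ n)
  have hroot : (Qn n).eval (qRoot (rootAngle n j)) = 0 :=
    Qn_eval_qRoot (Real.cos_pos_of_mem_Ioo ⟨by linarith [hθ.1, Real.pi_pos], hθ.2⟩)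
      (cos_mul_rootAngle (by omega) j)
  rcases hz with rfl | rfl
  · exact hroot
  · rwa [IsRoot, Qn_eval_neg]

lemma Qn_coeff_of_odd (n : ℕ) {m : ℕ} (hm : Odd m) : (Qn n).coeff m = 0 :=
  coeff_eq_zero_of_comp_neg_X_eq_self (Qn_comp_neg_X n) hm

lemma Qn_natDegree_le_card_qRoots (n : ℕ) : (Qn n).natDegree ≤ #(qRoots n) := by
  obtain ⟨k, hk⟩ := even_natDegree_of_coeff_odd_eq_zero fun _ => Qn_coeff_of_odd n
  have := Qn_natDegree_le n
  rw [card_qRoots]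
  omega

lemma Qn_natDegree (n : ℕ) : (Qn n).natDegree = 2 * (n / 2) := by
  rw [← card_qRoots]
  exact (Qn_natDegree_le_card_qRoots n).antisymm
    (card_le_natDegree_of_forall_isRoot (Qn_ne_zero n) fun _ => Qn_isRoot_of_mem_qRoots)

lemma Qn_isRoot_iff {n : ℕ} {z : ℂ} : (Qn n).IsRoot z ↔ z ∈ qRoots n :=
  ⟨mem_of_isRoot_of_natDegree_le_card (Qn_ne_zero n) (fun _ => Qn_isRoot_of_mem_qRoots)
    (Qn_natDegree_le_card_qRoots n), Qn_isRoot_of_mem_qRoots⟩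

theorem Qn_polynomial_structure_general (n : ℕ) (Q : Polynomial ℂ)
    (hQ : ∀ t : ℝ, t ∈ Set.Icc (0 : ℝ) 1 → Q.eval (t : ℂ) =
      ((Real.cos (2 * n * Real.arcsin (Real.sqrt t)) +
        Real.cosh (2 * n * Real.arsinh (Real.sqrt t)) : ℝ) : ℂ)) :
    (∀ m : ℕ, Odd m → Q.coeff m = 0) ∧
      Q.natDegree = 2 * (n / 2) ∧
      Q.coeff n = 2 ^ (2 * n - 1) * (1 + (-1 : ℂ) ^ n) ∧
      (∀ z : ℂ, Q.eval z = 0 ↔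
        ∃ j ∈ Finset.Icc 1 (n / 2),
          z = Complex.I * (Real.sin (π * (2 * j - 1) / (2 * n)) : ℂ) ^ 2 /
              (2 * (Real.cos (π * (2 * j - 1) / (2 * n)) : ℂ)) ∨
          z = -Complex.I * (Real.sin (π * (2 * j - 1) / (2 * n)) : ℂ) ^ 2 /
              (2 * (Real.cos (π * (2 * j - 1) / (2 * n)) : ℂ))) := by
  obtain rfl : Q = Qn n := eq_of_forall_eval_ofReal_eq (Set.Icc_infinite zero_lt_one)
    fun t ht => (hQ t ht).trans (Qn_eval_ofReal ht.1 ht.2).symm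
  refine ⟨fun m => Qn_coeff_of_odd n, Qn_natDegree n, Qn_coeff_self n, fun z => ?_⟩
  rw [← IsRoot.def, Qn_isRoot_iff, mem_qRoots]
  simp only [qRoot, rootAngle, neg_mul, neg_div]

theorem Qn_polynomial_structure (n : ℕ) (hn : 0 < n) (Q : Polynomial ℂ)
    (hQ : ∀ t : ℝ, t ∈ Set.Icc (0 : ℝ) 1 → Q.eval (t : ℂ) =
      ((Real.cos (2 * n * Real.arcsin (Real.sqrt t)) +
        Real.cosh (2 * n * Real.arsinh (Real.sqrt t)) : ℝ) : ℂ)) :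
    (∀ m : ℕ, Odd m → Q.coeff m = 0) ∧
      Q.natDegree = 2 * (n / 2) ∧
      Q.coeff n = 2 ^ (2 * n - 1) * (1 + (-1 : ℂ) ^ n) ∧
      (∀ z : ℂ, Q.eval z = 0 ↔
        ∃ j ∈ Finset.Icc 1 (n / 2),
          z = Complex.I * (Real.sin (π * (2 * j - 1) / (2 * n)) : ℂ) ^ 2 /
              (2 * (Real.cos (π * (2 * j - 1) / (2 * n)) : ℂ)) ∨
          z = -Complex.I * (Real.sin (π * (2 * j - 1) / (2 * n)) : ℂ) ^ 2 /
              (2 * (Real.cos (π * (2 * j - 1) / (2 * n)) : ℂ))) :=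
  Qn_polynomial_structure_general n Q hQ
end

section
/- For real ξ, η > 0 and m > 0 satisfying cos(2ξ)cosh(2η) = 1 and sin(2ξ)sinh(2η) = m², with 0 < 2ξ < π/2, one has tan ξ = tanh η, and if additionally m = sin φ / √(cos φ) type data is given via sin(2ξ)sinh(2η) = sin²φ/cos φ for some φ ∈ (0, π/2) with 2ξ = φ, then η = (1/2)·arcsinh(tan φ). -/
/-!
The relation `cos 2ξ · cosh 2η = 1` says that `2ξ` is the Gudermannian of `2η`, so
`sinh 2η = tan 2ξ`. The second hypothesis then reads `sin² 2ξ / cos 2ξ = sin² φ / cos φ`, and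
`x ↦ sin² x / cos x = sec x - cos x` is strictly increasing on `[0, π/2)`, whence `2ξ = φ`.
The half-angle formulas for `tan` and `tanh` turn `sinh 2η = tan 2ξ` into `tan ξ = tanh η`.
-/

open Real Set

namespace Real

-- When `cos x = 0` both sides are `0` by the junk value of division.
theorem tan_eq_sin_two_mul_div_one_add_cos_two_mul (x : ℝ) :
    tan x = sin (2 * x) / (1 + cos (2 * x)) := by
  rw [tan_eq_sin_div_cos, sin_two_mul, cos_two_mul]
  rcases eq_or_ne (cos x) 0 with h | h
  · simp [h]
  · field_simp
    ring

theorem tanh_eq_sinh_two_mul_div_one_add_cosh_two_mul (y : ℝ) :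
    tanh y = sinh (2 * y) / (1 + cosh (2 * y)) := by
  rw [tanh_eq_sinh_div_cosh, sinh_two_mul, cosh_two_mul]
  field_simp
  rw [cosh_sq]
  ring

theorem sin_sq_div_cos_eq_inv_sub (x : ℝ) : sin x ^ 2 / cos x = (cos x)⁻¹ - cos x := by
  rcases eq_or_ne (cos x) 0 with h | h
  · simp [h]
  · rw [sin_sq]
    field_simp

theorem strictMonoOn_sin_sq_div_cos :
    StrictMonoOn (fun x => sin x ^ 2 / cos x) (Ico 0 (π / 2)) := by
  have hinv_sub : StrictAntiOn (fun c : ℝ => c⁻¹ - c) (Ioi 0) := fun a ha b hb hab => by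
    have := strictAntiOn_inv_pos ha hb hab
    dsimp only
    linarith
  have hcos : StrictAntiOn cos (Ico 0 (π / 2)) :=
    strictAntiOn_cos.mono (Ico_subset_Icc_self.trans (Icc_subset_Icc_right (by linarith [pi_pos])))
  simp_rw [sin_sq_div_cos_eq_inv_sub]
  exact hinv_sub.comp hcos fun x hx => cos_pos_of_mem_Ioo ⟨by linarith [hx.1, pi_pos], hx.2⟩

theorem sinh_eq_tan_of_cos_mul_cosh_eq_one {x y : ℝ} (h : cos x * cosh y = 1) (hy : 0 ≤ y)
    (hx : 0 ≤ sin x) : sinh y = tan x := by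
  have hcos : cos x = (cosh y)⁻¹ := eq_inv_of_mul_eq_one_left h
  have hcos_pos : 0 < cos x := by rw [hcos]; positivity
  refine (pow_left_inj₀ (sinh_nonneg_iff.mpr hy) (tan_eq_sin_div_cos x ▸ div_nonneg hx hcos_pos.le) two_ne_zero).1 ?_
  rw [tan_eq_sin_div_cos, div_pow, sin_sq, sinh_sq, hcos]
  field_simp

theorem tan_eq_tanh_of_cos_two_mul_mul_cosh_two_mul_eq_one {x y : ℝ}
    (h : cos (2 * x) * cosh (2 * y) = 1) (hy : 0 ≤ y) (hx : 0 ≤ sin (2 * x)) :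
    tan x = tanh y := by
  have hcosh : cosh (2 * y) = (cos (2 * x))⁻¹ := eq_inv_of_mul_eq_one_right h
  have hcos_pos : 0 < cos (2 * x) := by rw [eq_inv_of_mul_eq_one_left h]; positivity
  rw [tan_eq_sin_two_mul_div_one_add_cos_two_mul, tanh_eq_sinh_two_mul_div_one_add_cosh_two_mul,
    sinh_eq_tan_of_cos_mul_cosh_eq_one h (by linarith) hx, tan_eq_sin_div_cos, hcosh]
  have : 0 < 1 + cos (2 * x) := by linarith
  field_simp
  ring

end Real

theorem xi_eta_determination (ξ η φ : ℝ) (hξ : 0 < ξ) (hη : 0 < η)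
    (hξ2 : 2 * ξ < π / 2) (hφ0 : 0 < φ) (hφ1 : φ < π / 2)
    (h1 : Real.cos (2 * ξ) * Real.cosh (2 * η) = 1)
    (h2 : Real.sin (2 * ξ) * Real.sinh (2 * η) = Real.sin φ ^ 2 / Real.cos φ) :
    Real.tan ξ = Real.tanh η ∧ ξ = φ / 2 ∧ η = (1 / 2) * Real.arsinh (Real.tan φ) := by
  have hsin : 0 < sin (2 * ξ) := sin_pos_of_pos_of_lt_pi (by linarith) (by linarith [pi_pos])
  have hsinh : sinh (2 * η) = tan (2 * ξ) :=
    sinh_eq_tan_of_cos_mul_cosh_eq_one h1 (by linarith) hsin.le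
  have hξφ : 2 * ξ = φ := by
    refine strictMonoOn_sin_sq_div_cos.injOn ⟨by linarith, hξ2⟩ ⟨hφ0.le, hφ1⟩ ?_
    rw [← h2, hsinh, tan_eq_sin_div_cos]
    ring
  refine ⟨tan_eq_tanh_of_cos_two_mul_mul_cosh_two_mul_eq_one h1 hη.le hsin.le, by linarith, ?_⟩
  rw [← hξφ, ← hsinh, arsinh_sinh]
  ring
end

section
/- Define α_z = 2n·arcsinh(sin(πz/(2n))) for complex z (principal branches), with n a fixed positive integer, and let y_* = (2n/π)·ln(1+√2). Then ∫_{iy_*}^{0} [sin(πz/2)·sinh(α_z/2) / ((cos πz + cosh α_z)·sinh(α_z/n))] dz = ∫_0^n [sin(πx/2)·sinh(α_x/2) / ((cos πx + cosh α_x)·sinh(α_x/n))] dx, where the left integral is taken along the segment of the imaginary axis from iy_* to 0. -/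
/-!
The substitution `y = φ x`, `φ = subst n`, i.e. `φ x = (2n/π) arsinh (sin (π x / (2n)))`, maps
`[0, n]` increasingly onto `[0, y_*]`, and it is exactly the one for which `α x = π φ x` and
`α (i φ x) = i π x`. So on the imaginary axis the roles of `π z` and `α z` are swapped (`sin`,
`cos` become `sinh`, `cosh` and vice versa), and `-i f (i φ x)` and `f x` differ only in the last
factor of the denominator, `sin (π x / n)` versus `sinh (π φ x / n)`. Their ratio is `φ' x`,
which is the change of variables.
-/

open Real Complex intervalIntegral

lemma csqrt_ofReal {t : ℝ} (ht : 0 ≤ t) : csqrt (t : ℂ) = (Real.sqrt t : ℂ) := by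
  rw [csqrt, show (1 : ℂ) / 2 = ((1 / 2 : ℝ) : ℂ) by norm_num, ← Complex.ofReal_cpow ht,
    Real.sqrt_eq_rpow]

lemma carsinh_ofReal (t : ℝ) : carsinh (t : ℂ) = (Real.arsinh t : ℂ) := by
  have hsq : (1 : ℂ) + (t : ℂ) ^ 2 = ((1 + t ^ 2 : ℝ) : ℂ) := by push_cast; ring
  have hexp : (t : ℂ) + (Real.sqrt (1 + t ^ 2) : ℂ) = ((Real.exp (Real.arsinh t) : ℝ) : ℂ) := by
    rw [Real.exp_arsinh]; push_cast; ring
  rw [carsinh, hsq, csqrt_ofReal (by positivity), hexp,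
    ← Complex.ofReal_log (Real.exp_pos _).le, Real.log_exp]

lemma carsinh_I_mul_ofReal {t : ℝ} (h₀ : -1 ≤ t) (h₁ : t ≤ 1) :
    carsinh (I * t) = I * (Real.arcsin t : ℂ) := by
  have hsq : (1 : ℂ) + (I * t) ^ 2 = ((1 - t ^ 2 : ℝ) : ℂ) := by
    push_cast; rw [mul_pow, I_sq]; ring
  have hexp : I * (t : ℂ) + (Real.cos (Real.arcsin t) : ℂ) = Complex.exp (Real.arcsin t * I) := by
    rw [Complex.exp_mul_I, ← Complex.ofReal_cos, ← Complex.ofReal_sin, Real.sin_arcsin h₀ h₁]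
    ring
  rw [carsinh, hsq, csqrt_ofReal (by nlinarith), ← Real.cos_arcsin, hexp, Complex.log_exp]
  · ring
  · simpa using (Real.neg_pi_div_two_le_arcsin t).trans_lt' (by linarith [Real.pi_pos])
  · simpa using (Real.arcsin_le_pi_div_two t).trans (by linarith [Real.pi_pos])

namespace ContourSymmetry

noncomputable def alpha (N : ℝ) (z : ℂ) : ℂ := 2 * N * carsinh (Complex.sin (π * z / (2 * N)))

noncomputable def integrand (N : ℝ) (z : ℂ) : ℂ :=
  Complex.sin (π * z / 2) * Complex.sinh (alpha N z / 2) /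
    ((Complex.cos (π * z) + Complex.cosh (alpha N z)) * Complex.sinh (alpha N z / N))

noncomputable def subst (N x : ℝ) : ℝ := 2 * N / π * arsinh (Real.sin (π * x / (2 * N)))

noncomputable def substDeriv (N x : ℝ) : ℝ :=
  Real.cos (π * x / (2 * N)) / √(1 + Real.sin (π * x / (2 * N)) ^ 2)

variable {N : ℝ}

lemma integrand_of_alpha_eq {z w : ℂ} (h : alpha N z = π * w) :
    integrand N z = Complex.sin (π * z / 2) * Complex.sinh (π * w / 2) /
      ((Complex.cos (π * z) + Complex.cosh (π * w)) * Complex.sinh (π * w / N)) := by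
  rw [integrand, h]

lemma integrand_I_mul_of_alpha_eq {z w : ℂ} (h : alpha N (I * w) = I * (π * z)) :
    integrand N (I * w) = Complex.sinh (π * w / 2) * I * (Complex.sin (π * z / 2) * I) /
      ((Complex.cosh (π * w) + Complex.cos (π * z)) * (Complex.sin (π * z / N) * I)) := by
  have e₁ : π * (I * w) / 2 = π * w / 2 * I := by ring
  have e₂ : I * (π * z) / 2 = π * z / 2 * I := by ring
  have e₃ : I * (π * z) / N = π * z / N * I := by ring
  have e₄ : π * (I * w) = π * w * I := by ring
  have e₅ : I * (π * z) = π * z * I := by ring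
  rw [integrand, h, e₁, e₂, e₃, e₄, e₅, Complex.sin_mul_I, Complex.sinh_mul_I, Complex.cos_mul_I,
    Complex.cosh_mul_I, Complex.sinh_mul_I]

lemma subst_zero : subst N 0 = 0 := by simp [subst]

lemma subst_self (hN : N ≠ 0) : subst N N = 2 * N / π * Real.log (1 + √2) := by
  have hu : π * N / (2 * N) = π / 2 := by field_simp
  rw [subst, hu, Real.sin_pi_div_two, Real.arsinh]
  norm_num

lemma pi_mul_subst_div (hN : N ≠ 0) (x : ℝ) :
    π * subst N x / (2 * N) = arsinh (Real.sin (π * x / (2 * N))) := by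
  rw [subst]; field_simp

lemma alpha_ofReal (x : ℝ) : alpha N x = π * (subst N x : ℂ) := by
  have hu : (π * (x : ℂ) / (2 * N)) = ((π * x / (2 * N) : ℝ) : ℂ) := by push_cast; ring
  rw [alpha, hu, ← Complex.ofReal_sin, carsinh_ofReal, subst]
  push_cast
  field_simp [Complex.ofReal_ne_zero.2 Real.pi_ne_zero]

lemma alpha_I_mul_subst (hN : 0 < N) {x : ℝ} (hx : x ∈ Set.Icc (-N) N) :
    alpha N (I * subst N x) = I * (π * x) := by
  set u := π * x / (2 * N)
  have hu : u ∈ Set.Icc (-(π / 2)) (π / 2) := by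
    constructor
    · rw [le_div_iff₀ (by positivity)]; nlinarith [hx.1, Real.pi_pos]
    · rw [div_le_iff₀ (by positivity)]; nlinarith [hx.2, Real.pi_pos]
  have hsin : Complex.sin (π * (I * subst N x) / (2 * N)) = I * Real.sin u := by
    have hw : π * (I * subst N x) / (2 * N) = ((π * subst N x / (2 * N) : ℝ) : ℂ) * I := by
      push_cast; ring
    rw [hw, Complex.sin_mul_I, ← Complex.ofReal_sinh, pi_mul_subst_div hN.ne', Real.sinh_arsinh,
      mul_comm]
  have hxu : (π * x : ℂ) = 2 * N * u := by exact_mod_cast (by simp only [u]; field_simp)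
  rw [alpha, hsin, carsinh_I_mul_ofReal (Real.neg_one_le_sin u) (Real.sin_le_one u),
    Real.arcsin_sin hu.1 hu.2, hxu]
  ring

lemma hasDerivAt_subst (hN : N ≠ 0) (x : ℝ) : HasDerivAt (subst N) (substDeriv N x) x := by
  have hu : HasDerivAt (fun x : ℝ => π * x / (2 * N)) (π / (2 * N)) x := by
    simpa using ((hasDerivAt_id x).const_mul π).div_const (2 * N)
  refine ((((Real.hasDerivAt_sin _).comp x hu).arsinh).const_mul (2 * N / π)).congr_deriv ?_
  simp only [substDeriv, Function.comp_apply, smul_eq_mul]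
  field_simp

lemma substDeriv_pos (hN : 0 < N) {x : ℝ} (hx : x ∈ Set.Ioo (-N) N) : 0 < substDeriv N x := by
  refine div_pos (Real.cos_pos_of_mem_Ioo ⟨?_, ?_⟩) (by positivity)
  · rw [lt_div_iff₀ (by positivity)]; nlinarith [hx.1, Real.pi_pos]
  · rw [div_lt_iff₀ (by positivity)]; nlinarith [hx.2, Real.pi_pos]

lemma substDeriv_mul_sinh (hN : N ≠ 0) (x : ℝ) :
    substDeriv N x * Real.sinh (π * subst N x / N) = Real.sin (π * x / N) := by
  have hdouble : π * subst N x / N = 2 * arsinh (Real.sin (π * x / (2 * N))) := by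
    rw [← pi_mul_subst_div hN]; field_simp
  have hhalf : π * x / N = 2 * (π * x / (2 * N)) := by field_simp
  rw [hdouble, hhalf, Real.sinh_two_mul, Real.sinh_arsinh, Real.cosh_arsinh, substDeriv,
    Real.sin_two_mul]
  field_simp

lemma integrand_eq_substDeriv_smul (hN : 0 < N) {x : ℝ} (hx : x ∈ Set.Ioo (-N) N) :
    integrand N x = substDeriv N x • (-I * integrand N (I * subst N x)) := by
  have hJ : (substDeriv N x : ℂ) ≠ 0 := Complex.ofReal_ne_zero.2 (substDeriv_pos hN hx).ne'
  have hjac : (substDeriv N x : ℂ) * Complex.sinh (π * subst N x / N)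
      = Complex.sin (π * x / N) := by
    exact_mod_cast congrArg Complex.ofReal (substDeriv_mul_sinh hN.ne' x)
  rw [integrand_of_alpha_eq (alpha_ofReal x),
    integrand_I_mul_of_alpha_eq (alpha_I_mul_subst hN (Set.Ioo_subset_Icc_self hx)), ← hjac,
    Complex.real_smul]
  field_simp
  rw [I_sq]
  ring

end ContourSymmetry

open ContourSymmetry

theorem contour_symmetry (n : ℕ) (hn : 0 < n) :
    let α : ℂ → ℂ := fun z => 2 * n * carsinh (Complex.sin (π * z / (2 * n)))
    let f : ℂ → ℂ := fun z =>
      Complex.sin (π * z / 2) * Complex.sinh (α z / 2) /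
        ((Complex.cos (π * z) + Complex.cosh (α z)) * Complex.sinh (α z / n))
    let ystar : ℝ := 2 * n / π * Real.log (1 + Real.sqrt 2)
    Complex.I * ∫ y in ystar..(0 : ℝ), f (Complex.I * y) =
      ∫ x in (0 : ℝ)..(n : ℝ), f (x : ℂ) := by
  intro α f ystar
  have hN : (0 : ℝ) < n := by exact_mod_cast hn
  have hf : f = integrand n := by
    funext z
    simp only [f, α, integrand, alpha, Complex.ofReal_natCast]
  have hystar : ystar = subst n n := (subst_self hN.ne').symm
  have hIoo : Set.Ioo 0 (n : ℝ) ⊆ Set.Ioo (-n) n := Set.Ioo_subset_Ioo_left (by linarith)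
  have hderiv_nonneg : ∀ x ∈ Set.Ioo (min 0 (n : ℝ)) (max 0 n), 0 ≤ substDeriv n x := by
    rw [min_eq_left hN.le, max_eq_right hN.le]
    exact fun x hx => (substDeriv_pos hN (hIoo hx)).le
  rw [hf]
  calc I * ∫ y in ystar..0, integrand n (I * y)
      = ∫ y in subst n 0..subst n n, -I * integrand n (I * y) := by
        rw [subst_zero, ← hystar, integral_symm, integral_const_mul]; ring
    _ = ∫ x in 0..(n : ℝ), substDeriv n x • (-I * integrand n (I * subst n x)) :=
        (integral_deriv_smul_comp_of_deriv_nonneg (g := fun y : ℝ => -I * integrand n (I * y))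
          (fun x _ => (hasDerivAt_subst hN.ne' x).continuousAt.continuousWithinAt)
          (fun x _ => hasDerivAt_subst hN.ne' x) hderiv_nonneg).symm
    _ = ∫ x in 0..(n : ℝ), integrand n x :=
        integral_congr_Ioo_of_le hN.le fun x hx =>
          (integrand_eq_substDeriv_smul hN (hIoo hx)).symm
end

section
/- ∫_0^∞ x·cos(x)·cosh(x) / (cos(2x) + cosh(2x)) dx = 0. -/
/-!
For real `x`, `2 |cosh ((1 - i) x)|² = cos 2x + cosh 2x`, so the integrand is
`Re (x / (2 cosh ((1 - i) x)))`. Expanding `1 / (2 cosh z) = ∑ (-1)ⁿ e^{-(2n+1) z}` (valid for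
`Re z > 0`) and integrating term by term with `∫₀^∞ x e^{-a x} dx = 1 / a²`, the `n`-th term
contributes `Re ((-1)ⁿ / ((2n+1)² (1 - i)²))`, which vanishes because `(1 - i)² = -2i`.
-/

open Real MeasureTheory Set Filter Topology
open scoped Complex

theorem Complex.hasSum_inv_two_cosh {z : ℂ} (hz : 0 < z.re) :
    HasSum (fun n : ℕ => (-1) ^ n * cexp (-((2 * n + 1) * z))) (2 * Complex.cosh z)⁻¹ := by
  have hr : ‖-cexp (-(2 * z))‖ < 1 := by
    rw [norm_neg, Complex.norm_exp, Real.exp_lt_one_iff]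
    simpa using hz
  have hterm (n : ℕ) :
      cexp (-z) * (-cexp (-(2 * z))) ^ n = (-1) ^ n * cexp (-((2 * n + 1) * z)) := by
    rw [neg_pow, ← Complex.exp_nat_mul, mul_left_comm, ← Complex.exp_add]
    ring_nf
  have hsum : cexp (-z) * (1 - -cexp (-(2 * z)))⁻¹ = (2 * Complex.cosh z)⁻¹ := by
    rw [Complex.two_cosh, Complex.exp_neg z, ← mul_inv, sub_neg_eq_add, mul_one_add,
      ← Complex.exp_add, ← Complex.exp_neg]
    ring_nf
  simpa only [hterm, hsum] using (hasSum_geometric_of_norm_lt_one hr).mul_left (cexp (-z))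

theorem Complex.re_inv_two_cosh (z : ℂ) :
    ((2 * Complex.cosh z)⁻¹).re
      = Real.cosh z.re * Real.cos z.im / (Real.cosh (2 * z.re) + Real.cos (2 * z.im)) := by
  have hcosh : 2 * Complex.cosh z = ((2 * (Real.cosh z.re * Real.cos z.im) : ℝ) : ℂ)
      + ((2 * (Real.sinh z.re * Real.sin z.im) : ℝ) : ℂ) * Complex.I := by
    conv_lhs => rw [← Complex.re_add_im z]
    rw [Complex.cosh_add, Complex.cosh_mul_I, Complex.sinh_mul_I, ← Complex.ofReal_cosh,
      ← Complex.ofReal_sinh, ← Complex.ofReal_cos, ← Complex.ofReal_sin]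
    push_cast
    ring
  have hnormSq : (2 * (Real.cosh z.re * Real.cos z.im)) ^ 2
      + (2 * (Real.sinh z.re * Real.sin z.im)) ^ 2
      = 2 * (Real.cosh (2 * z.re) + Real.cos (2 * z.im)) := by
    rw [Real.cosh_two_mul, Real.cos_two_mul]
    linear_combination (4 * Real.cos z.im ^ 2 - 2) * Real.cosh_sq_sub_sinh_sq z.re
      + 4 * Real.sinh z.re ^ 2 * Real.sin_sq_add_cos_sq z.im
  rw [hcosh, Complex.inv_re, Complex.normSq_add_mul_I, Complex.add_re, Complex.ofReal_re,
    Complex.re_ofReal_mul, Complex.I_re, mul_zero, add_zero, hnormSq]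
  exact mul_div_mul_left _ _ two_ne_zero

theorem Complex.re_inv_sq_ofReal_mul_one_sub_I (c : ℝ) :
    (((c * (1 - Complex.I)) ^ 2)⁻¹).re = 0 := by
  have hsq : (c * (1 - Complex.I)) ^ 2 = ((-2 * c ^ 2 : ℝ) : ℂ) * Complex.I := by
    push_cast
    linear_combination c ^ 2 * Complex.I_sq
  rw [hsq, Complex.inv_re, Complex.re_ofReal_mul, Complex.I_re, mul_zero, zero_div]

theorem Complex.norm_ofReal_mul_exp_neg_mul (a : ℂ) (x : ℝ) :
    ‖(x : ℂ) * cexp (-(a * x))‖ = |x| * rexp (-(a.re * x)) := by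
  simp [Complex.norm_exp]

section LaplaceTransform

variable {a : ℂ}

theorem integrableOn_ofReal_mul_cexp_neg_mul (ha : 0 < a.re) :
    IntegrableOn (fun x : ℝ => (x : ℂ) * cexp (-(a * x))) (Ioi 0) := by
  have h := integrableOn_rpow_mul_exp_neg_mul_rpow (s := 1) (p := 1) (by norm_num) one_pos ha
  refine h.mono' (by fun_prop) ((ae_restrict_iff' measurableSet_Ioi).2 (ae_of_all _ ?_))
  intro x hx
  rw [Complex.norm_ofReal_mul_exp_neg_mul, abs_of_pos (mem_Ioi.1 hx), Real.rpow_one, neg_mul]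

theorem tendsto_cexp_neg_mul_atTop (ha : 0 < a.re) :
    Tendsto (fun x : ℝ => cexp (-(a * x))) atTop (𝓝 0) := by
  rw [tendsto_zero_iff_norm_tendsto_zero]
  have h := tendsto_exp_neg_atTop_nhds_zero.comp (tendsto_id.const_mul_atTop ha)
  simpa [Function.comp_def, Complex.norm_exp] using h

theorem tendsto_ofReal_mul_cexp_neg_mul_atTop (ha : 0 < a.re) :
    Tendsto (fun x : ℝ => (x : ℂ) * cexp (-(a * x))) atTop (𝓝 0) := by
  rw [tendsto_zero_iff_norm_tendsto_zero]
  refine (tendsto_rpow_mul_exp_neg_mul_atTop_nhds_zero 1 a.re ha).congr' ?_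
  filter_upwards [eventually_ge_atTop 0] with x hx
  rw [Complex.norm_ofReal_mul_exp_neg_mul, abs_of_nonneg hx, Real.rpow_one, neg_mul]

theorem hasDerivAt_antideriv_ofReal_mul_cexp_neg_mul (ha : a ≠ 0) (x : ℝ) :
    HasDerivAt (fun x : ℝ => -((x / a + (a ^ 2)⁻¹) * cexp (-(a * x))))
      ((x : ℂ) * cexp (-(a * x))) x := by
  have hlin : HasDerivAt (fun x : ℝ => (x : ℂ)) 1 x := Complex.ofRealCLM.hasDerivAt
  have hexp : HasDerivAt (fun x : ℝ => cexp (-(a * x))) (cexp (-(a * x)) * -a) x := by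
    simpa using (hlin.const_mul a).fun_neg.cexp
  refine (((hlin.div_const a).add_const (a ^ 2)⁻¹).mul hexp).neg.congr_deriv ?_
  field_simp
  ring

theorem integral_ofReal_mul_cexp_neg_mul (ha : 0 < a.re) :
    ∫ x in Ioi (0 : ℝ), (x : ℂ) * cexp (-(a * x)) = (a ^ 2)⁻¹ := by
  have ha0 : a ≠ 0 := fun h => by simp [h] at ha
  have hlim : Tendsto (fun x : ℝ => -((x / a + (a ^ 2)⁻¹) * cexp (-(a * x)))) atTop (𝓝 0) := by
    have h := ((tendsto_ofReal_mul_cexp_neg_mul_atTop ha).div_const a).add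
      ((tendsto_cexp_neg_mul_atTop ha).const_mul (a ^ 2)⁻¹)
    simpa [add_mul, div_mul_eq_mul_div] using h.neg
  rw [integral_Ioi_of_hasDerivAt_of_tendsto'
    (fun x _ => hasDerivAt_antideriv_ofReal_mul_cexp_neg_mul ha0 x)
    (integrableOn_ofReal_mul_cexp_neg_mul ha) hlim]
  simp

end LaplaceTransform

theorem integral_mul_exp_neg_mul {r : ℝ} (hr : 0 < r) :
    ∫ x in Ioi (0 : ℝ), x * rexp (-(r * x)) = (r ^ 2)⁻¹ := by
  apply Complex.ofReal_injective
  rw [← integral_complex_ofReal]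
  push_cast
  exact integral_ofReal_mul_cexp_neg_mul (by simpa using hr)

/-- The `n`-th term of the expansion of `x / (2 cosh ((1 - i) x))` given by
`Complex.hasSum_inv_two_cosh`. -/
noncomputable def cosCoshTerm (n : ℕ) (x : ℝ) : ℂ :=
  (-1) ^ n * ((x : ℂ) * cexp (-((2 * n + 1) * (1 - Complex.I) * x)))

theorem zero_lt_re_odd_mul_one_sub_I (n : ℕ) : 0 < ((2 * n + 1) * (1 - Complex.I)).re := by
  rw [show ((2 * n + 1 : ℂ) * (1 - Complex.I)).re = 2 * n + 1 by simp]
  positivity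

theorem hasSum_re_cosCoshTerm {x : ℝ} (hx : 0 < x) :
    HasSum (fun n => (cosCoshTerm n x).re)
      (x * Real.cos x * Real.cosh x / (Real.cos (2 * x) + Real.cosh (2 * x))) := by
  have h := Complex.hasSum_re
    ((Complex.hasSum_inv_two_cosh (z := (1 - Complex.I) * x) (by simpa using hx)).mul_left (x : ℂ))
  have hterm (n : ℕ) : (x : ℂ) * ((-1) ^ n * cexp (-((2 * n + 1) * ((1 - Complex.I) * x))))
      = cosCoshTerm n x := by
    rw [cosCoshTerm]
    ring_nf
  have hre : ((1 - Complex.I) * x).re = x := by simp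
  have him : ((1 - Complex.I) * x).im = -x := by simp
  simp only [hterm] at h
  rw [Complex.re_ofReal_mul, Complex.re_inv_two_cosh, hre, him, mul_neg, Real.cos_neg,
    Real.cos_neg] at h
  convert h using 1
  ring

theorem integrableOn_cosCoshTerm (n : ℕ) : IntegrableOn (cosCoshTerm n) (Ioi 0) :=
  (integrableOn_ofReal_mul_cexp_neg_mul (zero_lt_re_odd_mul_one_sub_I n)).const_mul _

theorem integral_re_cosCoshTerm (n : ℕ) : ∫ x in Ioi (0 : ℝ), (cosCoshTerm n x).re = 0 := by
  have h := integral_re (integrableOn_cosCoshTerm n)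
  simp only [RCLike.re_to_complex] at h
  have hpure := Complex.re_inv_sq_ofReal_mul_one_sub_I (2 * n + 1)
  push_cast at hpure
  rw [h]
  simp only [cosCoshTerm]
  rw [integral_const_mul,
    integral_ofReal_mul_cexp_neg_mul (zero_lt_re_odd_mul_one_sub_I n),
    show (-1 : ℂ) ^ n = ((-1 : ℝ) ^ n : ℝ) by push_cast; rfl, Complex.re_ofReal_mul, hpure,
    mul_zero]

theorem integral_norm_re_cosCoshTerm_le (n : ℕ) :
    ∫ x in Ioi (0 : ℝ), ‖(cosCoshTerm n x).re‖ ≤ ((2 * n + 1 : ℝ) ^ 2)⁻¹ := calc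
  _ ≤ ∫ x in Ioi (0 : ℝ), ‖cosCoshTerm n x‖ :=
    integral_mono_of_nonneg (ae_of_all _ fun _ => norm_nonneg _)
      (integrableOn_cosCoshTerm n).norm (ae_of_all _ fun _ => Complex.abs_re_le_norm _)
  _ = ∫ x in Ioi (0 : ℝ), x * rexp (-((2 * n + 1) * x)) := by
    refine setIntegral_congr_fun measurableSet_Ioi fun x hx => ?_
    rw [cosCoshTerm, norm_mul, norm_pow, norm_neg, norm_one, one_pow, one_mul,
      Complex.norm_ofReal_mul_exp_neg_mul, abs_of_pos (mem_Ioi.1 hx)]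
    simp
  _ = ((2 * n + 1 : ℝ) ^ 2)⁻¹ := integral_mul_exp_neg_mul (by positivity)

theorem summable_integral_norm_re_cosCoshTerm :
    Summable fun n => ∫ x in Ioi (0 : ℝ), ‖(cosCoshTerm n x).re‖ := by
  have hodd : Summable fun n : ℕ => (((2 * n + 1 : ℕ) : ℝ) ^ 2)⁻¹ :=
    ((Real.summable_nat_pow_inv (p := 2)).mpr one_lt_two).comp_injective
      (i := fun n : ℕ => 2 * n + 1) (by intro m n h; simpa using h)
  refine .of_nonneg_of_le (fun n => integral_nonneg fun _ => norm_nonneg _)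
    integral_norm_re_cosCoshTerm_le ?_
  exact_mod_cast hodd

theorem glaisher_cos_cosh_integral :
    ∫ x in Set.Ioi (0 : ℝ),
        x * Real.cos x * Real.cosh x / (Real.cos (2 * x) + Real.cosh (2 * x)) = 0 := by
  calc ∫ x in Ioi (0 : ℝ), x * Real.cos x * Real.cosh x / (Real.cos (2 * x) + Real.cosh (2 * x))
      = ∫ x in Ioi (0 : ℝ), ∑' n, (cosCoshTerm n x).re :=
        setIntegral_congr_fun measurableSet_Ioi fun x hx => (hasSum_re_cosCoshTerm hx).tsum_eq.symm
    _ = ∑' n, ∫ x in Ioi (0 : ℝ), (cosCoshTerm n x).re :=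
        (integral_tsum_of_summable_integral_norm (fun n => (integrableOn_cosCoshTerm n).re)
          summable_integral_norm_re_cosCoshTerm).symm
    _ = 0 := by simp [integral_re_cosCoshTerm]
end
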